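/- Let m ≥ 1 with 2^{m+1} dividing N, and let ψ ∈ Π[N] be a signal whose 2^m-sample shifts {ψ[·−2^m l] : l = 0,…,N/2^m−1} are orthonormal. Define ψ′_μ[n] = Σ_{k=0}^{N/2^m−1} h^μ[k]·ψ[n−2^m k] for μ = 0,1, where h^μ is the N/2^m-periodic filter whose DFT (of length N/2^m) is ĥ^0[n] = β[2^m n] and ĥ^1[n] = α[2^m n]. Then the 2^{m+1}-sample shifts {ψ′_0[·−2^{m+1} l] : l = 0,…,N/2^{m+1}−1} are orthonormal, the 2^{m+1}-sample shifts of ψ′_1 are orthonormal, and every shift ψ′_0[·−2^{m+1} l] is orthogonal to every shift ψ′_1[·−2^{m+1} p]. -/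

import Mathlib

open Finset

noncomputable def omegaN (N : ℕ) : ℂ := Complex.exp (2 * Real.pi * Complex.I / N)

noncomputable def U4r (N r : ℕ) (n : ℤ) : ℝ :=
  ((Real.cos (Real.pi * n / N)) ^ (4 * r) + (Real.sin (Real.pi * n / N)) ^ (4 * r)) / 2

noncomputable def betaF (N r : ℕ) (n : ℤ) : ℂ :=
  Complex.ofReal ((Real.cos (Real.pi * n / N)) ^ (2 * r) / Real.sqrt (U4r N r n))

noncomputable def alphaF (N r : ℕ) (n : ℤ) : ℂ :=
  omegaN N ^ n * Complex.ofReal ((Real.sin (Real.pi * n / N)) ^ (2 * r) / Real.sqrt (U4r N r n))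

noncomputable def psi0 (N r : ℕ) (k : ℤ) : ℂ :=
  (N : ℂ)⁻¹ * ∑ n ∈ Finset.range N, omegaN N ^ (k * (n : ℤ)) * betaF N r n

noncomputable def psi1 (N r : ℕ) (k : ℤ) : ℂ :=
  (N : ℂ)⁻¹ * ∑ n ∈ Finset.range N, omegaN N ^ (k * (n : ℤ)) * alphaF N r n

noncomputable def ip (N : ℕ) (x y : ℤ → ℂ) : ℂ :=
  ∑ k ∈ Finset.range N, x k * (starRingEnd ℂ) (y k)

/-- The N/2^m-periodic filter h^μ whose (length N/2^m) DFT is ĥ⁰[n] = β[2^m n],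
ĥ¹[n] = α[2^m n]; given here through the inverse DFT, with ω_{N/2^m} = ω_N^{2^m}. -/
noncomputable def hfil (N r m : ℕ) (μ : Fin 2) (k : ℤ) : ℂ :=
  ((N / 2 ^ m : ℕ) : ℂ)⁻¹ * ∑ n ∈ Finset.range (N / 2 ^ m),
    omegaN N ^ ((2 ^ m : ℤ) * k * (n : ℤ)) *
      (if μ.val = 0 then betaF N r ((2 ^ m : ℤ) * n) else alphaF N r ((2 ^ m : ℤ) * n))

/-! The orthonormality of the `2^m`-shifts of `ψ` turns the inner product of the shifted
outputs `ψ′_μ(· - 2^(m+1) l)` and `ψ′_ν(· - 2^(m+1) p)` into the correlation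
`∑ k, h^μ[k] * conj (h^ν[k + 2(l - p)])` of the two filters. By Parseval for the DFT of length
`M = N / 2^m` this is `M⁻¹ ∑ n, ĥ^μ[n] * conj (ĥ^ν[n]) * ω_M^(-2(l-p)n)`. Since the shift is even,
the phase has period `M / 2` in `n`, so the sum folds onto `n < M / 2`, where the
quadrature-mirror identities `ĥ^μ[n] conj ĥ^ν[n] + ĥ^μ[n + M/2] conj ĥ^ν[n + M/2] = 2 δ_μν`
(from `cos^(4r) + sin^(4r) = 2 U^(4r)` and `ω^(N/2) = -1`) leave
`2 δ_μν ∑_{n < M/2} ω_(M/2)^((p-l)n) = M δ_μν δ_lp`.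
-/

open Function ComplexConjugate

lemma isPrimitiveRoot_omegaN {N : ℕ} (hN : N ≠ 0) : IsPrimitiveRoot (omegaN N) N :=
  Complex.isPrimitiveRoot_exp N hN

lemma omegaN_ne_zero (N : ℕ) : omegaN N ≠ 0 := Complex.exp_ne_zero _

lemma conj_omegaN_zpow (N : ℕ) (z : ℤ) : conj (omegaN N ^ z) = omegaN N ^ (-z) := by
  rw [map_zpow₀, zpow_neg, ← inv_zpow, omegaN, ← Complex.exp_conj, ← Complex.exp_neg]
  congr 2
  simp [map_div₀, neg_div, map_ofNat]

lemma omegaN_mul_zpow_mul {a : ℕ} (ha : a ≠ 0) (b : ℕ) (z : ℤ) :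
    omegaN (a * b) ^ ((a : ℤ) * z) = omegaN b ^ z := by
  rw [zpow_mul, zpow_natCast, omegaN, omegaN, ← Complex.exp_nat_mul]
  congr 2
  push_cast
  field_simp

lemma geom_sum_eq_ite_of_pow_eq_one {x : ℂ} {M : ℕ} (hx : x ^ M = 1) :
    ∑ k ∈ range M, x ^ k = if x = 1 then (M : ℂ) else 0 := by
  split_ifs with h
  · simp [h]
  · rw [geom_sum_eq h, hx, sub_self, zero_div]

lemma sum_omegaN_zpow_mul_sub {M a b : ℕ} (ha : a < M) (hb : b < M) :
    ∑ k ∈ range M, omegaN M ^ ((k : ℤ) * (a - b)) = if a = b then (M : ℂ) else 0 := by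
  have hζ := isPrimitiveRoot_omegaN (N := M) (by omega)
  have hpow (k : ℕ) : omegaN M ^ ((k : ℤ) * (a - b)) = (omegaN M ^ ((a : ℤ) - b)) ^ k := by
    rw [← zpow_natCast, ← zpow_mul, mul_comm]
  simp only [hpow]
  rw [geom_sum_eq_ite_of_pow_eq_one (by rw [← zpow_natCast, ← zpow_mul, mul_comm, zpow_mul,
    zpow_natCast, hζ.pow_eq_one, one_zpow])]
  refine if_congr ?_ rfl rfl
  rw [hζ.zpow_eq_one_iff_dvd]
  constructor
  · intro h
    have := Int.eq_zero_of_abs_lt_dvd h (abs_sub_lt_iff.2 ⟨by omega, by omega⟩)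
    omega
  · rintro rfl
    simp

noncomputable def idft (M : ℕ) (G : ℕ → ℂ) (k : ℤ) : ℂ :=
  (M : ℂ)⁻¹ * ∑ n ∈ range M, omegaN M ^ (k * n) * G n

lemma idft_periodic (M : ℕ) (G : ℕ → ℂ) : Periodic (idft M G) M := by
  intro k
  rcases M.eq_zero_or_pos with rfl | hM
  · simp
  have hζ := isPrimitiveRoot_omegaN hM.ne'
  have hshift (n : ℕ) : omegaN M ^ ((k + M) * n) = omegaN M ^ (k * n) := by
    rw [add_mul, zpow_add₀ (omegaN_ne_zero M),
      (hζ.zpow_eq_one_iff_dvd _).2 (dvd_mul_right _ _), mul_one]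
  simp only [idft, hshift]

lemma idft_mul_conj_idft {M : ℕ} (G G' : ℕ → ℂ) (k d : ℤ) :
    idft M G k * conj (idft M G' (k + d)) = (M : ℂ)⁻¹ * (M : ℂ)⁻¹ * ∑ n ∈ range M,
      ∑ n' ∈ range M, G n * conj (G' n') * omegaN M ^ (-(d * n')) *
        omegaN M ^ (k * ((n : ℤ) - n')) := by
  simp only [idft, map_mul, map_inv₀, map_natCast, map_sum, conj_omegaN_zpow]
  rw [mul_mul_mul_comm, sum_mul_sum]
  congr 1
  refine sum_congr rfl fun n _ => sum_congr rfl fun n' _ => ?_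
  have : omegaN M ^ (k * n) * omegaN M ^ (-((k + d) * n')) =
      omegaN M ^ (-(d * n')) * omegaN M ^ (k * ((n : ℤ) - n')) := by
    rw [← zpow_add₀ (omegaN_ne_zero M), ← zpow_add₀ (omegaN_ne_zero M)]
    ring_nf
  linear_combination G n * conj (G' n') * this

lemma sum_idft_mul_conj_idft_add {M : ℕ} (hM : 0 < M) (G G' : ℕ → ℂ) (d : ℤ) :
    ∑ k ∈ range M, idft M G k * conj (idft M G' (k + d)) =
      (M : ℂ)⁻¹ * ∑ n ∈ range M, G n * conj (G' n) * omegaN M ^ (-(d * n)) := by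
  have hMC : (M : ℂ) ≠ 0 := Nat.cast_ne_zero.2 hM.ne'
  have hcollapse (n : ℕ) (hn : n < M) : ∑ n' ∈ range M, G n * conj (G' n') *
      omegaN M ^ (-(d * n')) * ∑ k ∈ range M, omegaN M ^ ((k : ℤ) * ((n : ℤ) - n')) =
        M * (G n * conj (G' n) * omegaN M ^ (-(d * n))) := by
    rw [sum_congr rfl fun n' hn' => by rw [sum_omegaN_zpow_mul_sub hn (mem_range.1 hn')]]
    simp [mul_ite, mul_comm (M : ℂ), hn]
  simp only [idft_mul_conj_idft, ← mul_sum]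
  rw [sum_comm, sum_congr rfl fun n _ => sum_comm]
  simp only [← mul_sum]
  rw [sum_congr rfl fun n hn => hcollapse n (mem_range.1 hn), ← mul_sum]
  field_simp

lemma ip_sum_mul_sum {ι : Type*} (N : ℕ) (s t : Finset ι) (a b : ι → ℂ) (x y : ι → ℤ → ℂ) :
    ip N (fun n => ∑ k ∈ s, a k * x k n) (fun n => ∑ k ∈ t, b k * y k n) =
      ∑ k ∈ s, ∑ k' ∈ t, a k * conj (b k') * ip N (x k) (y k') := by
  simp only [ip, map_sum, map_mul, sum_mul, mul_sum]
  rw [sum_comm, sum_congr rfl fun _ _ => sum_comm, sum_comm]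
  exact sum_congr rfl fun _ _ => sum_congr rfl fun _ _ => sum_congr rfl fun _ _ => by ring

def HasOrthonormalShifts (N M : ℕ) (s : ℤ) (ψ : ℤ → ℂ) : Prop :=
  ∀ l p : ℕ, l < M → p < M →
    ip N (fun n => ψ (n - s * (l : ℤ))) (fun n => ψ (n - s * (p : ℤ))) = if l = p then 1 else 0

lemma ip_shift_eq_ite_modEq {N M : ℕ} {s : ℤ} (hM : 0 < M) (hN : (N : ℤ) = s * M)
    {ψ : ℤ → ℂ} (hper : Periodic ψ N)
    (horth : HasOrthonormalShifts N M s ψ)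
    (a b : ℤ) :
    ip N (fun n => ψ (n - s * a)) (fun n => ψ (n - s * b)) = if a ≡ b [ZMOD M] then 1 else 0 := by
  have hM' : (0 : ℤ) < M := by exact_mod_cast hM
  have hred (a : ℤ) : (fun n => ψ (n - s * a)) = fun n => ψ (n - s * (a % M)) := by
    funext n
    rw [← hper.sub_int_mul_eq (-(a / M)), Int.cast_id]
    congr 1
    linear_combination s * Int.mul_ediv_add_emod a M + a / M * hN
  obtain ⟨l, hl⟩ := Int.eq_ofNat_of_zero_le (Int.emod_nonneg a hM'.ne')
  obtain ⟨p, hp⟩ := Int.eq_ofNat_of_zero_le (Int.emod_nonneg b hM'.ne')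
  have hlM := Int.emod_lt_of_pos a hM'
  have hpM := Int.emod_lt_of_pos b hM'
  rw [hred a, hred b, hl, hp, horth l p (by omega) (by omega)]
  exact if_congr (by unfold Int.ModEq; rw [hl, hp, Nat.cast_inj]) rfl rfl

lemma sum_range_ite_modEq {M : ℕ} (hM : 0 < M) {f : ℤ → ℂ} (hf : Periodic f M) (c : ℤ) :
    ∑ k ∈ range M, (if c ≡ k [ZMOD M] then f k else 0) = f c := by
  have hM' : (0 : ℤ) < M := by exact_mod_cast hM
  obtain ⟨l, hl⟩ := Int.eq_ofNat_of_zero_le (Int.emod_nonneg c hM'.ne')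
  have hlM : l < M := by have := Int.emod_lt_of_pos c hM'; omega
  have hmod (k : ℕ) (hk : k < M) : c ≡ k [ZMOD M] ↔ k = l := by
    unfold Int.ModEq
    rw [hl, Int.emod_eq_of_lt (by omega) (by omega)]
    omega
  rw [sum_congr rfl fun k hk => if_congr (hmod k (mem_range.1 hk)) rfl rfl, sum_ite_eq',
    if_pos (mem_range.2 hlM), ← hl]
  rw [← hf.int_mul (c / M) (c % M), Int.cast_id, Int.emod_add_ediv_mul]

lemma ip_filter_eq_sum_mul_conj {N M : ℕ} {s : ℤ} (hM : 0 < M) (hN : (N : ℤ) = s * M)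
    {ψ : ℤ → ℂ} (hper : Periodic ψ N)
    (horth : HasOrthonormalShifts N M s ψ)
    (h : ℤ → ℂ) {g : ℤ → ℂ} (hg : Periodic g M) (u v : ℤ) :
    ip N (fun n => ∑ k ∈ range M, h k * ψ (n - s * u - s * k))
        (fun n => ∑ k ∈ range M, g k * ψ (n - s * v - s * k)) =
      ∑ k ∈ range M, h k * conj (g (k + (u - v))) := by
  have hshift (w : ℤ) (k : ℕ) :
      (fun n => ψ (n - s * w - s * k)) = fun n => ψ (n - s * (w + k)) := by
    funext n
    ring_nf
  have hcond (k k' : ℕ) : u + k ≡ v + k' [ZMOD M] ↔ k + (u - v) ≡ k' [ZMOD M] := by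
    rw [Int.modEq_iff_dvd, Int.modEq_iff_dvd, show v + k' - (u + k) = k' - (k + (u - v)) by ring]
  refine (ip_sum_mul_sum N (range M) (range M) (fun k => h k) (fun k => g k)
    (fun k n => ψ (n - s * u - s * k)) (fun k n => ψ (n - s * v - s * k))).trans ?_
  simp only [hshift, ip_shift_eq_ite_modEq hM hN hper horth, hcond, mul_ite, mul_one, mul_zero]
  refine sum_congr rfl fun k _ => ?_
  exact sum_range_ite_modEq hM (f := fun x => h k * conj (g x)) (fun x => by simp only [hg x]) _

lemma sum_range_two_mul_mul_omegaN_zpow {H : ℕ} (hH : 0 < H) {P : ℕ → ℂ} {c : ℂ}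
    (hP : ∀ n, P n + P (H + n) = c) {l p : ℕ} (hl : l < H) (hp : p < H) :
    ∑ n ∈ range (2 * H), P n * omegaN (2 * H) ^ (-((2 * l - 2 * p : ℤ) * n)) =
      if l = p then H * c else 0 := by
  have hζ := isPrimitiveRoot_omegaN (N := 2 * H) (by omega)
  have hhalf (n : ℕ) : omegaN (2 * H) ^ (-((2 * l - 2 * p : ℤ) * n)) =
      omegaN H ^ ((n : ℤ) * (p - l)) := by
    rw [show -((2 * l - 2 * p : ℤ) * n) = ((2 : ℕ) : ℤ) * (n * (p - l)) by push_cast; ring,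
      omegaN_mul_zpow_mul two_ne_zero]
  have hperiod (n : ℕ) : omegaN (2 * H) ^ (-((2 * l - 2 * p : ℤ) * (H + n : ℕ))) =
      omegaN H ^ ((n : ℤ) * (p - l)) := by
    rw [← hhalf, show -((2 * l - 2 * p : ℤ) * (H + n : ℕ)) =
        -((2 * l - 2 * p : ℤ) * n) + ((2 * H : ℕ) : ℤ) * (p - l) by push_cast; ring,
      zpow_add₀ (omegaN_ne_zero _), (hζ.zpow_eq_one_iff_dvd _).2 (dvd_mul_right _ _), mul_one]
  rw [show range (2 * H) = range (H + H) by rw [two_mul], sum_range_add]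
  simp only [hperiod, hhalf, ← sum_add_distrib, ← add_mul, hP, ← mul_sum,
    sum_omegaN_zpow_mul_sub hp hl, eq_comm (a := p)]
  split_ifs <;> ring

noncomputable def filterSymbol (N r : ℕ) (μ : Fin 2) (q : ℤ) : ℂ :=
  if μ.val = 0 then betaF N r q else alphaF N r q

lemma hfil_eq_idft {N : ℕ} (r : ℕ) {m : ℕ} (hdvd : 2 ^ m ∣ N) (μ : Fin 2) :
    hfil N r m μ = idft (N / 2 ^ m) (fun n => filterSymbol N r μ (2 ^ m * n)) := by
  obtain ⟨M, rfl⟩ := hdvd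
  funext k
  rw [hfil, idft, Nat.mul_div_cancel_left _ (by positivity)]
  congr 1
  refine sum_congr rfl fun n _ => ?_
  rw [filterSymbol, show (2 ^ m : ℤ) * k * n = ((2 ^ m : ℕ) : ℤ) * (k * n) by push_cast; ring,
    omegaN_mul_zpow_mul (by positivity)]

lemma U4r_pos (N r : ℕ) (n : ℤ) : 0 < U4r N r n := by
  set θ := Real.pi * n / N
  have hθ := Real.sin_sq_add_cos_sq θ
  have hpow (x : ℝ) : x ^ (4 * r) = (x ^ 2) ^ (2 * r) := by ring
  rw [U4r, hpow, hpow]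
  rcases (sq_nonneg (Real.cos θ)).lt_or_eq with hc | hc
  · have := pow_pos hc (2 * r)
    positivity
  · have := pow_pos (show 0 < Real.sin θ ^ 2 by linarith) (2 * r)
    positivity

lemma pi_mul_add_half_div {N K : ℕ} (hK : 2 * K = N) (hN : 0 < N) (q : ℤ) :
    Real.pi * ((q + K : ℤ) : ℝ) / N = Real.pi * q / N + Real.pi / 2 := by
  have hK' : (K : ℝ) ≠ 0 := Nat.cast_ne_zero.2 (by omega)
  rw [← hK]
  push_cast
  field_simp

lemma omegaN_zpow_half {N K : ℕ} (hK : 2 * K = N) (hN : 0 < N) : omegaN N ^ (K : ℤ) = -1 := by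
  subst hK
  have hζ := (isPrimitiveRoot_omegaN hN.ne').pow_of_dvd (p := K) (by omega) (dvd_mul_left K 2)
  rw [Nat.mul_div_cancel _ (by omega)] at hζ
  rw [zpow_natCast, hζ.eq_neg_one_of_two_right]

lemma U4r_add_half {N K : ℕ} (hK : 2 * K = N) (hN : 0 < N) (r : ℕ) (q : ℤ) :
    U4r N r (q + K) = U4r N r q := by
  rw [U4r, U4r, pi_mul_add_half_div hK hN, Real.cos_add_pi_div_two, Real.sin_add_pi_div_two,
    Even.neg_pow ⟨2 * r, by ring⟩, add_comm]

lemma betaF_add_half {N K : ℕ} (hK : 2 * K = N) (hN : 0 < N) (r : ℕ) (q : ℤ) :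
    betaF N r (q + K) = (Real.sin (Real.pi * q / N) ^ (2 * r) / √(U4r N r q) : ℝ) := by
  rw [betaF, U4r_add_half hK hN, pi_mul_add_half_div hK hN, Real.cos_add_pi_div_two,
    Even.neg_pow ⟨r, by ring⟩]

lemma alphaF_add_half {N K : ℕ} (hK : 2 * K = N) (hN : 0 < N) (r : ℕ) (q : ℤ) :
    alphaF N r (q + K) =
      -omegaN N ^ q * (Real.cos (Real.pi * q / N) ^ (2 * r) / √(U4r N r q) : ℝ) := by
  rw [alphaF, U4r_add_half hK hN, pi_mul_add_half_div hK hN, Real.sin_add_pi_div_two,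
    zpow_add₀ (omegaN_ne_zero N), omegaN_zpow_half hK hN, mul_neg_one]

lemma filterSymbol_pairing {N K : ℕ} (hK : 2 * K = N) (hN : 0 < N) (r : ℕ) (q : ℤ)
    (μ ν : Fin 2) :
    filterSymbol N r μ q * conj (filterSymbol N r ν q) +
        filterSymbol N r μ (q + K) * conj (filterSymbol N r ν (q + K)) =
      if μ = ν then 2 else 0 := by
  set b : ℝ := Real.cos (Real.pi * q / N) ^ (2 * r) / √(U4r N r q)
  set a : ℝ := Real.sin (Real.pi * q / N) ^ (2 * r) / √(U4r N r q)
  have hab : (b : ℂ) * b + a * a = 2 := by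
    have hU := U4r_pos N r q
    have hab : b * b + a * a = 2 := by
      simp only [b, a, div_mul_div_comm, Real.mul_self_sqrt hU.le, ← pow_add, ← add_div]
      rw [div_eq_iff hU.ne', U4r]
      ring_nf
    exact_mod_cast hab
  have hω : omegaN N ^ q * conj (omegaN N) ^ q = 1 := by
    rw [← map_zpow₀, conj_omegaN_zpow, ← zpow_add₀ (omegaN_ne_zero N), add_neg_cancel, zpow_zero]
  have hβ : betaF N r q = b := rfl
  have hα : alphaF N r q = omegaN N ^ q * a := rfl
  have hβK : betaF N r (q + K) = a := betaF_add_half hK hN r q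
  have hαK : alphaF N r (q + K) = -omegaN N ^ q * b := alphaF_add_half hK hN r q
  fin_cases μ <;> fin_cases ν <;>
    simp only [filterSymbol, Fin.isValue, Fin.zero_eta, Fin.mk_one, one_ne_zero, zero_ne_one,
      ↓reduceIte, hβ, hα, hβK, hαK, map_mul, map_zpow₀, map_neg, Complex.conj_ofReal, neg_mul,
      mul_neg, neg_neg]
  · exact hab
  · ring
  · ring
  · linear_combination (↑a * ↑a + ↑b * ↑b : ℂ) * hω + hab

theorem stmt_4_general (j r m : ℕ) (hmj : m + 1 ≤ j)
    (N : ℕ) (hN : N = 2 ^ j) (ψ : ℤ → ℂ) (hper : ∀ k : ℤ, ψ (k + N) = ψ k)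
    (horth : ∀ l p : ℕ, l < N / 2 ^ m → p < N / 2 ^ m →
      ip N (fun n => ψ (n - 2 ^ m * (l : ℤ))) (fun n => ψ (n - 2 ^ m * (p : ℤ))) =
        if l = p then 1 else 0) :
    ∀ μ ν : Fin 2, ∀ l p : ℕ, l < N / 2 ^ (m + 1) → p < N / 2 ^ (m + 1) →
      ip N
        (fun n => ∑ k ∈ Finset.range (N / 2 ^ m),
          hfil N r m μ k * ψ (n - 2 ^ (m + 1) * (l : ℤ) - 2 ^ m * (k : ℤ)))
        (fun n => ∑ k ∈ Finset.range (N / 2 ^ m),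
          hfil N r m ν k * ψ (n - 2 ^ (m + 1) * (p : ℤ) - 2 ^ m * (k : ℤ))) =
      if μ = ν ∧ l = p then 1 else 0 := by
  intro μ ν l p hl hp
  have hM : N / 2 ^ m = 2 * (N / 2 ^ (m + 1)) := by
    rw [hN, Nat.pow_div (by omega) two_pos, Nat.pow_div hmj two_pos, ← pow_succ']
    congr 1
    omega
  have hH : 0 < N / 2 ^ (m + 1) :=
    Nat.div_pos (hN ▸ Nat.pow_le_pow_right two_pos hmj) (by positivity)
  set H := N / 2 ^ (m + 1)
  have hNH : N = 2 ^ m * (2 * H) := by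
    rw [← hM, Nat.mul_div_cancel' (hN ▸ pow_dvd_pow 2 (by omega))]
  have hdvd : 2 ^ m ∣ N := ⟨_, hNH⟩
  have hpair (n : ℕ) : filterSymbol N r μ (2 ^ m * n) * conj (filterSymbol N r ν (2 ^ m * n)) +
      filterSymbol N r μ (2 ^ m * (H + n : ℕ)) * conj (filterSymbol N r ν (2 ^ m * (H + n : ℕ))) =
        if μ = ν then 2 else 0 := by
    rw [show (2 ^ m : ℤ) * (H + n : ℕ) = 2 ^ m * n + (2 ^ m * H : ℕ) by push_cast; ring]
    exact filterSymbol_pairing (by rw [hNH]; ring) (by rw [hN]; positivity) r _ μ ν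
  simp only [show ∀ x : ℤ, (2 : ℤ) ^ (m + 1) * x = 2 ^ m * (2 * x) from fun x => by ring]
  rw [ip_filter_eq_sum_mul_conj (by omega) (by rw [hM, hNH]; push_cast; ring) hper horth _
      (hfil_eq_idft r hdvd ν ▸ idft_periodic _ _),
    hfil_eq_idft r hdvd μ, hfil_eq_idft r hdvd ν, sum_idft_mul_conj_idft_add (by omega), hM,
    sum_range_two_mul_mul_omegaN_zpow hH hpair hl hp]
  by_cases hμν : μ = ν <;> by_cases hlp : l = p <;> simp [hμν, hlp]
  field_simp [hH.ne']

/-- If the 2^m-sample shifts of ψ ∈ Π[N] are orthonormal, then the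
2^{m+1}-sample shifts of ψ′_μ[n] = Σ_k h^μ[k] ψ[n − 2^m k], μ = 0,1, are orthonormal and
the shifts of ψ′₀ are orthogonal to those of ψ′₁. -/
theorem stmt_4 (j r m : ℕ) (hj : 3 ≤ j) (hr : 1 ≤ r) (hm : 1 ≤ m) (hmj : m + 1 ≤ j)
    (N : ℕ) (hN : N = 2 ^ j) (ψ : ℤ → ℂ) (hper : ∀ k : ℤ, ψ (k + N) = ψ k)
    (horth : ∀ l p : ℕ, l < N / 2 ^ m → p < N / 2 ^ m →
      ip N (fun n => ψ (n - 2 ^ m * (l : ℤ))) (fun n => ψ (n - 2 ^ m * (p : ℤ))) =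
        if l = p then 1 else 0) :
    ∀ μ ν : Fin 2, ∀ l p : ℕ, l < N / 2 ^ (m + 1) → p < N / 2 ^ (m + 1) →
      ip N
        (fun n => ∑ k ∈ Finset.range (N / 2 ^ m),
          hfil N r m μ k * ψ (n - 2 ^ (m + 1) * (l : ℤ) - 2 ^ m * (k : ℤ)))
        (fun n => ∑ k ∈ Finset.range (N / 2 ^ m),
          hfil N r m ν k * ψ (n - 2 ^ (m + 1) * (p : ℤ) - 2 ^ m * (k : ℤ))) =
      if μ = ν ∧ l = p then 1 else 0 :=
  stmt_4_general j r m hmj N hN ψ hper horth
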